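/- Let q = 2^k with ζ = e^{2πi/2^k}, and let G_j : 𝔽_{2^m} → 𝔽₂ for 0 ≤ j ≤ k−1 be Boolean functions with G_j(0) = 0 and Σ_{t ∈ 𝔽_{2^m}} ζ^{Σ_{j=0}^{k−1} 2^j G_j(t)} = 0. Then the function f : 𝔽_{2^m} × 𝔽_{2^m} → ℤ_{2^k} given by f(x,y) = Σ_{j=0}^{k−1} 2^j G_j(x/y) (with the convention 1/0 = 0) is a gbent function in 2m variables, and its dual is f*(x,y) = Σ_{j=0}^{k−1} 2^j G_j(y/x). -/

import Mathlib

/-!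
Write `φ(t) = ζ^{Σ_j 2^j G_j(t)}` and `ψ(x) = (-1)^{Tr(x)}`. On each line `y ≠ 0` the
substitution `x = z y` turns the slice of `H_f(a, b)` into `Σ_z φ(z) ψ((a z + b) y)`; thanks
to `φ(0) = 1` and `Σ φ = 0` the slice `y = 0` has the same shape up to the extra term
`Σ_x ψ(a x)`. Summing over `y`, orthogonality of `ψ` leaves
`2^m Σ_{a z + b = 0} φ(z) + 2^m [a = 0]`, which is `2^m φ(b / a)` in every case
(in characteristic 2, `-b = b`).
-/

open scoped BigOperators

/-- `ζ_q = e^{2πi/q}`. -/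
noncomputable def zeta (q : ℕ) : ℂ := Complex.exp (2 * Real.pi * Complex.I / q)

noncomputable instance (p n : ℕ) [Fact p.Prime] : Fintype (GaloisField p n) :=
  Fintype.ofFinite _

/-- The absolute trace `Tr_m : 𝔽_{2^m} → 𝔽₂`. -/
noncomputable def tr (m : ℕ) (x : GaloisField 2 m) : ZMod 2 :=
  Algebra.trace (ZMod 2) (GaloisField 2 m) x

/-- The generalized Walsh–Hadamard transform of `f : 𝔽_{2^m} × 𝔽_{2^m} → ℤ_q`,
using the inner product `⟨(x₁,y₁),(x₂,y₂)⟩ = Tr_m(x₁x₂ + y₁y₂)`. -/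
noncomputable def gWHT2 {m q : ℕ} (f : GaloisField 2 m × GaloisField 2 m → ZMod q)
    (u : GaloisField 2 m × GaloisField 2 m) : ℂ :=
  ∑ x : GaloisField 2 m × GaloisField 2 m,
    zeta q ^ (f x).val * (-1 : ℂ) ^ (tr m (u.1 * x.1 + u.2 * x.2)).val

open Finset

theorem norm_zeta (q : ℕ) : ‖zeta q‖ = 1 := by
  rw [zeta, Complex.norm_exp]
  norm_num [Complex.div_re, Complex.mul_re, Complex.mul_im]

theorem val_sum_two_pow_mul_val {k : ℕ} (w : Fin k → ZMod 2) :
    (∑ j : Fin k, (2 ^ (j : ℕ) : ZMod (2 ^ k)) * ((w j).val : ZMod (2 ^ k))).val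
      = ∑ j : Fin k, 2 ^ (j : ℕ) * (w j).val := by
  have hlt : ∑ j : Fin k, 2 ^ (j : ℕ) * (w j).val < 2 ^ k :=
    calc ∑ j : Fin k, 2 ^ (j : ℕ) * (w j).val ≤ ∑ j : Fin k, 2 ^ (j : ℕ) :=
          sum_le_sum fun j _ =>
            mul_le_of_le_one_right (Nat.zero_le _) (Nat.le_of_lt_succ (w j).val_lt)
      _ = ∑ i ∈ range k, 2 ^ i := Fin.sum_univ_eq_sum_range (2 ^ ·) k
      _ < 2 ^ k := Nat.geomSum_lt le_rfl fun _ => mem_range.mp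
  rw [← ZMod.val_cast_of_lt hlt]
  push_cast
  rfl

section TraceChar

variable (F : Type*) [Field F] [Algebra (ZMod 2) F]

noncomputable def traceChar : AddChar F ℂ :=
  (AddChar.zmodChar 2 (by norm_num : (-1 : ℂ) ^ 2 = 1)).compAddMonoidHom
    (Algebra.trace (ZMod 2) F).toAddMonoidHom

theorem traceChar_apply (x : F) : traceChar F x = (-1) ^ (Algebra.trace (ZMod 2) F x).val := rfl

theorem traceChar_ne_one [Finite F] : traceChar F ≠ 1 := by
  obtain ⟨x, hx⟩ : ∃ x, Algebra.trace (ZMod 2) F x ≠ 0 := by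
    by_contra! h
    exact Algebra.trace_ne_zero (ZMod 2) F (LinearMap.ext h)
  have hx1 : Algebra.trace (ZMod 2) F x = 1 := (by decide : ∀ t : ZMod 2, t ≠ 0 → t = 1) _ hx
  refine AddChar.ne_one_iff.mpr ⟨x, ?_⟩
  rw [traceChar_apply, hx1, show (1 : ZMod 2).val = 1 from rfl]
  norm_num

end TraceChar

section CharacterSum

variable {F R : Type*} [Field F] [Fintype F] [DecidableEq F] [CommRing R] [IsDomain R]

theorem sum_div_mul_addChar_eq_of_sum_eq_zero {ψ : AddChar F R} (hψ : ψ ≠ 1) {φ : F → R}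
    (hφ0 : φ 0 = 1) (hφ : ∑ t, φ t = 0) (a b : F) :
    ∑ p : F × F, φ (p.1 / p.2) * ψ (a * p.1 + b * p.2) = Fintype.card F * φ (-b / a) := by
  have hprim := AddChar.IsPrimitive.of_ne_one hψ
  have slice : ∀ y, ∑ x, φ (x / y) * ψ (a * x + b * y) =
      ∑ z, φ z * ψ ((a * z + b) * y) + if y = 0 then ∑ x, ψ (x * a) else 0 := by
    intro y
    rcases eq_or_ne y 0 with rfl | hy
    · simp [hφ0, hφ, mul_comm]
    · rw [if_neg hy, add_zero, ← Equiv.sum_comp (Equiv.mulRight₀ y hy)]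
      refine sum_congr rfl fun z _ => ?_
      rw [Equiv.mulRight₀_apply, mul_div_cancel_right₀ _ hy]
      ring_nf
  calc ∑ p : F × F, φ (p.1 / p.2) * ψ (a * p.1 + b * p.2)
      = ∑ z, φ z * ∑ y, ψ (y * (a * z + b)) + ∑ x, ψ (x * a) := by
        simp_rw [Fintype.sum_prod_type_right, slice, sum_add_distrib, sum_ite_eq',
          if_pos (mem_univ _), mul_sum]
        rw [sum_comm]
        simp_rw [mul_comm _ (a * _ + b)]
    _ = Fintype.card F * φ (-b / a) := by
        simp_rw [AddChar.sum_mulShift _ hprim]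
        rcases eq_or_ne a 0 with rfl | ha
        · simp [← sum_mul, hφ, hφ0]
        · have : ∀ z, a * z + b = 0 ↔ z = -b / a := fun z => by
            rw [eq_div_iff ha, add_eq_zero_iff_eq_neg, mul_comm]
          simp [this, ha, mul_comm]

end CharacterSum

theorem stmt3 (m k : ℕ) (hm : 0 < m)
    (G : Fin k → GaloisField 2 m → ZMod 2)
    (hG0 : ∀ j, G j 0 = 0)
    (hGsum : ∑ t : GaloisField 2 m,
      zeta (2 ^ k) ^ (∑ j : Fin k, 2 ^ (j : ℕ) * (G j t).val) = 0)
    (f fstar : GaloisField 2 m × GaloisField 2 m → ZMod (2 ^ k))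
    (hf : ∀ x y, f (x, y) =
      ∑ j : Fin k, (2 ^ (j : ℕ) : ZMod (2 ^ k)) * ((G j (x / y)).val : ZMod (2 ^ k)))
    (hfstar : ∀ x y, fstar (x, y) =
      ∑ j : Fin k, (2 ^ (j : ℕ) : ZMod (2 ^ k)) * ((G j (y / x)).val : ZMod (2 ^ k))) :
    (∀ u, ‖gWHT2 f u‖ = (2 : ℝ) ^ m) ∧
    (∀ u, gWHT2 f u = (2 : ℂ) ^ m * zeta (2 ^ k) ^ (fstar u).val) := by
  classical
  set φ : GaloisField 2 m → ℂ := fun t =>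
    zeta (2 ^ k) ^ ∑ j : Fin k, 2 ^ (j : ℕ) * (G j t).val
  have hcard : Fintype.card (GaloisField 2 m) = 2 ^ m := by
    rw [Fintype.card_eq_nat_card, GaloisField.card 2 m hm.ne']
  have hWHT : ∀ a b, gWHT2 f (a, b) = 2 ^ m * φ (b / a) := by
    intro a b
    have h := sum_div_mul_addChar_eq_of_sum_eq_zero (traceChar_ne_one (GaloisField 2 m))
      (φ := φ) (by simp [φ, hG0]) hGsum a b
    rw [hcard, CharTwo.neg_eq, Nat.cast_pow, Nat.cast_ofNat] at h
    rw [← h, gWHT2]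
    refine sum_congr rfl fun p _ => ?_
    rw [hf, val_sum_two_pow_mul_val]
    rfl
  refine ⟨fun ⟨a, b⟩ => ?_, fun ⟨a, b⟩ => ?_⟩
  · rw [hWHT, norm_mul, norm_pow, norm_pow, norm_zeta, one_pow, mul_one, Complex.norm_two]
  · rw [hWHT, hfstar, val_sum_two_pow_mul_val]
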